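/- Let h be a complex number with exp(h) ≠ 1 and let [x] = (exp(hx/2) − exp(−hx/2))/(exp(h/2) − exp(−h/2)) for x ∈ ℂ. Let k ≥ 1 be an integer, fix two distinct indices l, p in the integer interval [−k, k−1], and let complex numbers L_{r,2k−2} (r ∈ [1−k, k−2]), L_{j,2k−1} (j ∈ [1−k, k−1]) and L_{r,2k} (r ∈ [−k, k−1], r ≠ l, r ≠ p) be given such that [L_{r,2k−1} − L_{j,2k−1} − s'] ≠ 0 and [L_{r,2k−1} − L_{j,2k−1} − s' + 1] ≠ 0 for all r ≠ j in [1−k, k−1] and s' ∈ {0, 1}. Then ∑_{s'=0}^{1} ∑_{j=1−k}^{k−1} (−1)^{s'} · ( ∏_{r=1−k}^{k−2} [L_{r,2k−2} − L_{j,2k−1} − s'] · ∏_{r=−k, r≠l,p}^{k−1} [L_{r,2k} − L_{j,2k−1} − s'] ) / ( ∏_{r≠j, r=1−k}^{k−1} [L_{r,2k−1} − L_{j,2k−1} − s'][L_{r,2k−1} − L_{j,2k−1} − s' + 1] ) = 0. (Identity (24c).) -/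

import Mathlib

/-! Since `[y - x] = e^{-hy/2} e^{-hx/2} (e^{hy} - e^{hx}) / (q - q⁻¹)`, for nodes `x_i`
(`i ∈ S`) and parameters `a_t` (`t ∈ T`) with `#T = #S - 2` the sum
`∑_i ∏_t [a_t - x_i] / ∏_{j ≠ i} [x_j - x_i]` is a constant multiple of
`∑_i P(v_i) / ∏_{j ≠ i} (v_i - v_j)` with `v_i = e^{h x_i}` and `P = ∏_t (X - e^{h a_t})`.
This is the coefficient of `X^(#S-1)` in the Lagrange interpolant of `P`, i.e. in `P` itself,
so it vanishes. Identity (24c) is the case of the `2(2k-1)` nodes `L_{j,2k-1} + s'`,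
`s' ∈ {0, 1}`: the factor `[±1] = ±1` that the node `L_{j,2k-1} + 1 - s'` contributes to the
denominator is the sign `(-1)^{s'}`. -/

open Finset

/-- The q-bracket `[x] = (exp(hx/2) - exp(-hx/2))/(exp(h/2) - exp(-h/2))`. -/
noncomputable def qbr (h x : ℂ) : ℂ :=
  (Complex.exp (h * x / 2) - Complex.exp (-(h * x) / 2)) /
    (Complex.exp (h / 2) - Complex.exp (-h / 2))

lemma qbr_sub_eq (h x y : ℂ) :
    qbr h (y - x) = Complex.exp (-(h * y) / 2) *
      (-Complex.exp (-(h * x) / 2) / (Complex.exp (h / 2) - Complex.exp (-h / 2))) *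
        (Complex.exp (h * x) - Complex.exp (h * y)) := by
  have e1 : Complex.exp (h * (y - x) / 2) =
      Complex.exp (-(h * y) / 2) * Complex.exp (-(h * x) / 2) * Complex.exp (h * y) := by
    rw [← Complex.exp_add, ← Complex.exp_add]; ring_nf
  have e2 : Complex.exp (-(h * (y - x)) / 2) =
      Complex.exp (-(h * y) / 2) * Complex.exp (-(h * x) / 2) * Complex.exp (h * x) := by
    rw [← Complex.exp_add, ← Complex.exp_add]; ring_nf
  rw [qbr, e1, e2]
  ring

lemma qbr_sub_eq_zero_of_exp_eq {h x y : ℂ} (hxy : Complex.exp (h * x) = Complex.exp (h * y)) :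
    qbr h (y - x) = 0 := by
  rw [qbr_sub_eq, hxy, sub_self, mul_zero]

lemma qbr_neg (h x : ℂ) : qbr h (-x) = -qbr h x := by
  rw [qbr, qbr, ← neg_div, neg_sub, mul_neg, neg_neg]

lemma exp_half_sub_exp_neg_half_ne_zero {h : ℂ} (hh : Complex.exp h ≠ 1) :
    Complex.exp (h / 2) - Complex.exp (-h / 2) ≠ 0 := by
  refine sub_ne_zero.mpr fun he => hh ?_
  rw [show h = h / 2 - -h / 2 by ring, Complex.exp_sub, he, div_self (Complex.exp_ne_zero _)]

lemma qbr_one {h : ℂ} (hh : Complex.exp h ≠ 1) : qbr h 1 = 1 := by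
  rw [qbr, mul_one, div_self (exp_half_sub_exp_neg_half_ne_zero hh)]

lemma prod_qbr_sub {ι : Type*} (h x : ℂ) (s : Finset ι) (a : ι → ℂ) :
    ∏ r ∈ s, qbr h (a r - x) = (∏ r ∈ s, Complex.exp (-(h * a r) / 2)) *
      (-Complex.exp (-(h * x) / 2) / (Complex.exp (h / 2) - Complex.exp (-h / 2))) ^ #s *
        ∏ r ∈ s, (Complex.exp (h * x) - Complex.exp (h * a r)) := by
  simp_rw [qbr_sub_eq, prod_mul_distrib, prod_const]

lemma Finset.prod_product_erase {α β M : Type*} [CommMonoid M] [DecidableEq α] [DecidableEq β]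
    (s : Finset α) {t : Finset β} (a : α) {b : β} (hb : b ∈ t) (f : α × β → M) :
    ∏ i ∈ (s ×ˢ t).erase (a, b), f i =
      (∏ x ∈ s.erase a, f (x, b)) * ∏ y ∈ t.erase b, ∏ x ∈ s, f (x, y) := by
  have hsplit : (s ×ˢ t).erase (a, b) = s.erase a ×ˢ {b} ∪ s ×ˢ t.erase b := by
    ext ⟨x, y⟩
    simp only [mem_erase, mem_product, mem_union, mem_singleton, ne_eq, Prod.mk.injEq]
    grind
  rw [hsplit, prod_union, prod_product, prod_product_right]
  · simp
  · simp +contextual [disjoint_left]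

theorem sum_prod_qbr_div_prod_qbr_eq_zero {ι κ : Type*} [DecidableEq ι] {h : ℂ}
    (hh : Complex.exp h ≠ 1) {S : Finset ι} {x : ι → ℂ}
    (hx : ∀ i ∈ S, ∀ j ∈ S, i ≠ j → qbr h (x j - x i) ≠ 0) (T : Finset κ) (a : κ → ℂ)
    (hcard : #T + 2 = #S) :
    ∑ i ∈ S, (∏ t ∈ T, qbr h (a t - x i)) / ∏ j ∈ S.erase i, qbr h (x j - x i) = 0 := by
  have hD := exp_half_sub_exp_neg_half_ne_zero hh
  have hinj : Set.InjOn (fun i => Complex.exp (h * x i)) S := fun i hi j hj he =>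
    by_contra fun hij => hx i hi j hj hij (qbr_sub_eq_zero_of_exp_eq he)
  have hterm : ∀ i ∈ S, (∏ t ∈ T, qbr h (a t - x i)) / ∏ j ∈ S.erase i, qbr h (x j - x i) =
      -((∏ t ∈ T, Complex.exp (-(h * a t) / 2)) * (Complex.exp (h / 2) - Complex.exp (-h / 2)) /
          ∏ j ∈ S, Complex.exp (-(h * x j) / 2)) *
        ((Lagrange.nodal T fun t => Complex.exp (h * a t)).eval (Complex.exp (h * x i)) /
          ∏ j ∈ S.erase i, (Complex.exp (h * x i) - Complex.exp (h * x j))) := by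
    intro i hi
    rw [prod_qbr_sub, prod_qbr_sub, ← mul_prod_erase S (fun j => Complex.exp (-(h * x j) / 2)) hi,
      Lagrange.eval_nodal, card_erase_of_mem hi, show #S - 1 = #T + 1 by omega, pow_succ]
    have hc := Complex.exp_ne_zero (-(h * x i) / 2)
    have hK : ∏ j ∈ S.erase i, Complex.exp (-(h * x j) / 2) ≠ 0 :=
      prod_ne_zero_iff.mpr fun j _ => Complex.exp_ne_zero _
    generalize Complex.exp (-(h * x i) / 2) = c at hc ⊢
    generalize Complex.exp (h / 2) - Complex.exp (-h / 2) = D at hD ⊢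
    have hw : (-c / D) ^ #T ≠ 0 := pow_ne_zero _ (div_ne_zero (neg_ne_zero.mpr hc) hD)
    generalize (-c / D) ^ #T = w at hw ⊢
    field_simp
  have hdeg : (Lagrange.nodal T fun t => Complex.exp (h * a t)).degree < (#S - 1 : ℕ) := by
    rw [Lagrange.degree_nodal]
    exact_mod_cast (by omega : #T < #S - 1)
  rw [sum_congr rfl hterm, ← mul_sum, ← Lagrange.coeff_eq_sum hinj (hdeg.trans_le (by simp)),
    Polynomial.coeff_eq_zero_of_degree_lt hdeg, mul_zero]

lemma prod_qbr_erase_pair_nodes {ι : Type*} [DecidableEq ι] {h : ℂ} (hh : Complex.exp h ≠ 1)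
    (R : Finset ι) (B : ι → ℂ) {s : ℕ} (hs : s < 2) {j : ι} (hj : j ∈ R) :
    ∏ i ∈ (range 2 ×ˢ R).erase (s, j), qbr h (B i.2 + i.1 - (B j + s)) =
      (-1) ^ s * ∏ r ∈ R.erase j, qbr h (B r - B j - s) * qbr h (B r - B j - s + 1) := by
  rw [prod_product_erase _ _ hj]
  congr 1
  · interval_cases s
    · simp [show (range 2).erase 0 = {1} by decide, qbr_one hh]
    · simp [show (range 2).erase 1 = {0} by decide, qbr_neg, qbr_one hh]
  · refine prod_congr rfl fun r _ => ?_
    rw [prod_range_succ, prod_range_one]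
    congr 2 <;> push_cast <;> ring

lemma qbr_pair_nodes_ne_zero {ι : Type*} {h : ℂ} (hh : Complex.exp h ≠ 1) {R : Finset ι} {B : ι → ℂ}
    (hB : ∀ r ∈ R, ∀ j ∈ R, r ≠ j → ∀ s' ∈ range 2,
      qbr h (B r - B j - (s' : ℂ)) ≠ 0 ∧ qbr h (B r - B j - (s' : ℂ) + 1) ≠ 0) :
    ∀ i ∈ range 2 ×ˢ R, ∀ i' ∈ range 2 ×ˢ R, i ≠ i' →
      qbr h (B i'.2 + i'.1 - (B i.2 + i.1)) ≠ 0 := by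
  rintro ⟨s, r⟩ hi ⟨t, j⟩ hi' hne
  obtain ⟨hs, hr⟩ := mem_product.1 hi
  obtain ⟨ht, hj⟩ := mem_product.1 hi'
  rw [mem_range] at hs ht
  rcases eq_or_ne r j with rfl | hrj
  · have hst : s ≠ t := fun hst => hne (by rw [hst])
    interval_cases s <;> interval_cases t <;> simp_all [qbr_neg, qbr_one hh]
  · have hBjr := hB j hj r hr hrj.symm s (mem_range.2 hs)
    interval_cases t
    · simpa [sub_sub] using hBjr.1
    · convert hBjr.2 using 2
      push_cast
      ring

/-- `A r` stands for `L_{r,2k-2}`, `B j` for `L_{j,2k-1}` and `C r` for `L_{r,2k}`. -/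
theorem identity_24c (h : ℂ) (hh : Complex.exp h ≠ 1) (k : ℤ) (hk : 1 ≤ k)
    (l p : ℤ) (hl : l ∈ Finset.Icc (-k) (k - 1)) (hp : p ∈ Finset.Icc (-k) (k - 1))
    (hlp : l ≠ p) (A B C : ℤ → ℂ)
    (hB : ∀ r ∈ Finset.Icc (1 - k) (k - 1), ∀ j ∈ Finset.Icc (1 - k) (k - 1), r ≠ j →
      ∀ s' ∈ Finset.range 2,
        qbr h (B r - B j - (s' : ℂ)) ≠ 0 ∧ qbr h (B r - B j - (s' : ℂ) + 1) ≠ 0) :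
    ∑ s' ∈ Finset.range 2, ∑ j ∈ Finset.Icc (1 - k) (k - 1), (-1 : ℂ) ^ s' *
      ((∏ r ∈ Finset.Icc (1 - k) (k - 2), qbr h (A r - B j - (s' : ℂ))) *
        ∏ r ∈ ((Finset.Icc (-k) (k - 1)).erase l).erase p, qbr h (C r - B j - (s' : ℂ))) /
      ∏ r ∈ (Finset.Icc (1 - k) (k - 1)).erase j,
        qbr h (B r - B j - (s' : ℂ)) * qbr h (B r - B j - (s' : ℂ) + 1) = 0 := by
  have hcard : #((Icc (1 - k) (k - 2)).disjSum (((Icc (-k) (k - 1)).erase l).erase p)) + 2 =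
      #(range 2 ×ˢ Icc (1 - k) (k - 1)) := by
    rw [card_disjSum, card_product, card_range, card_erase_of_mem (mem_erase.2 ⟨hlp.symm, hp⟩),
      card_erase_of_mem hl]
    simp only [Int.card_Icc]
    omega
  have hsum := sum_prod_qbr_div_prod_qbr_eq_zero hh (qbr_pair_nodes_ne_zero hh hB) _ (Sum.elim A C) hcard
  rw [sum_product] at hsum
  refine Eq.trans (sum_congr rfl fun s hs => sum_congr rfl fun j hj => ?_) hsum
  rw [prod_disjSum, prod_qbr_erase_pair_nodes hh _ _ (mem_range.1 hs) hj]
  simp only [Sum.elim_inl, Sum.elim_inr, sub_sub]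
  rw [← div_div, div_eq_mul_inv _ ((-1) ^ s), ← inv_pow, inv_neg_one, mul_comm]
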